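/- Let n ≥ 0 and let X be a globular set. Let ∼ be the equivalence relation on X_n generated by: x ∼ y whenever there exists c ∈ X_{n+1} with s(c) = x and t(c) = y. Then the component of the unit eta_X : X → t_n^* t_{n!} X in each degree k < n is a bijection X_k → (t_{n!} X)(k), and in degree n the component X_n → (t_{n!} X)(n) is surjective and induces a bijection X_n/∼ ≅ (t_{n!} X)(n). -/

import Mathlib

open CategoryTheory CategoryTheory.Limits Opposite

/-- Morphisms of the globe category. -/
inductive GlobeHom : ℕ → ℕ → Type where
  | ident (m : ℕ) : GlobeHom m m
  | sig {m n : ℕ} (h : m < n) : GlobeHom m n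
  | tau {m n : ℕ} (h : m < n) : GlobeHom m n

/-- Composition in the globe category: determined by the inner factor. -/
def GlobeHom.comp : {a b c : ℕ} → GlobeHom a b → GlobeHom b c → GlobeHom a c
  | _, _, _, .ident _, g => g
  | _, _, _, .sig h, .ident _ => .sig h
  | _, _, _, .sig h, .sig h' => .sig (h.trans h')
  | _, _, _, .sig h, .tau h' => .sig (h.trans h')
  | _, _, _, .tau h, .ident _ => .tau h
  | _, _, _, .tau h, .sig h' => .tau (h.trans h')
  | _, _, _, .tau h, .tau h' => .tau (h.trans h')

lemma GlobeHom.comp_assoc : ∀ {a b c d : ℕ} (f : GlobeHom a b) (g : GlobeHom b c)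
    (h : GlobeHom c d), (f.comp g).comp h = f.comp (g.comp h) := by
  intro a b c d f g h
  cases f <;> cases g <;> cases h <;> rfl

lemma GlobeHom.le : ∀ {a b : ℕ}, GlobeHom a b → a ≤ b
  | _, _, .ident _ => le_rfl
  | _, _, .sig h => h.le
  | _, _, .tau h => h.le

/-- The globe category `G`: objects are natural numbers. -/
def Globe : Type := ℕ

instance : Category Globe where
  Hom m n := GlobeHom m n
  id m := GlobeHom.ident m
  comp f g := f.comp g
  id_comp _ := rfl
  comp_id := by rintro _ _ (_|_|_) <;> rfl
  assoc f g h := GlobeHom.comp_assoc f g h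

/-- The object of `Globe` corresponding to `k : ℕ`. -/
def gl (k : ℕ) : Globe := k

/-- The underlying natural number of an object of `Globe`. -/
def gval (m : Globe) : ℕ := m

/-- Globular sets: presheaves on the globe category. -/
abbrev GlobSet := Globeᵒᵖ ⥤ Type

/-- The source map `X_{k+1} → X_k` of a globular set. -/
def gsrc (X : GlobSet) (k : ℕ) : X.obj (op (gl (k+1))) → X.obj (op (gl k)) :=
  X.map (Quiver.Hom.op (show gl k ⟶ gl (k+1) from GlobeHom.sig (Nat.lt_succ_self k)))

/-- The target map `X_{k+1} → X_k` of a globular set. -/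
def gtgt (X : GlobSet) (k : ℕ) : X.obj (op (gl (k+1))) → X.obj (op (gl k)) :=
  X.map (Quiver.Hom.op (show gl k ⟶ gl (k+1) from GlobeHom.tau (Nat.lt_succ_self k)))

/-- Two `k`-cells are parallel if `k = 0` or they have the same source and target. -/
def Parallel (X : GlobSet) : (k : ℕ) → X.obj (op (gl k)) → X.obj (op (gl k)) → Prop
  | 0, _, _ => True
  | (k+1), x, y => gsrc X k x = gsrc X k y ∧ gtgt X k x = gtgt X k y

/-- The full subcategory `G_n` of the globe category on objects `≤ n`. -/
def GlobeLE (n : ℕ) := ObjectProperty.FullSubcategory (fun m : Globe => gval m ≤ n)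

instance (n : ℕ) : Category (GlobeLE n) := ObjectProperty.FullSubcategory.category _

/-- The inclusion `ι_n : G_n ⥤ G`. -/
def iotaGlobe (n : ℕ) : GlobeLE n ⥤ Globe := ObjectProperty.ι _

/-- A morphism of globes coming from an equality of dimensions. -/
def GlobeHom.ofEq : {a b : ℕ} → a = b → GlobeHom a b
  | _, _, rfl => .ident _

/-- A tag distinguishing the three kinds of globe morphisms. -/
def GlobeHom.tag : {a b : ℕ} → GlobeHom a b → ℕ
  | _, _, .ident _ => 0
  | _, _, .sig _ => 1
  | _, _, .tau _ => 2

lemma GlobeHom.ext_tag : ∀ {a b : ℕ} (f g : GlobeHom a b), f.tag = g.tag → f = g := by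
  intro a b f g h
  cases f <;> cases g <;> simp_all [GlobeHom.tag]

lemma GlobeHom.tag_comp : ∀ {a b c : ℕ} (f : GlobeHom a b) (g : GlobeHom b c),
    (f.comp g).tag = if f.tag = 0 then g.tag else f.tag := by
  intro a b c f g
  cases f <;> cases g <;> simp [GlobeHom.comp, GlobeHom.tag]

lemma GlobeHom.tag_ofEq {a b : ℕ} (h : a = b) : (GlobeHom.ofEq h).tag = 0 := by
  cases h; rfl

/-- The truncation of a globe morphism. -/
def GlobeHom.trunc (n : ℕ) : {a b : ℕ} → GlobeHom a b → GlobeHom (min a n) (min b n)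
  | _, _, .ident m => .ident _
  | a, b, .sig h => if h' : min a n < min b n then .sig h' else .ofEq (by omega)
  | a, b, .tau h => if h' : min a n < min b n then .tau h' else .ofEq (by omega)

lemma GlobeHom.tag_trunc (n : ℕ) : ∀ {a b : ℕ} (f : GlobeHom a b),
    (f.trunc n).tag = if min a n < min b n then f.tag else 0 := by
  intro a b f
  cases f with
  | ident => simp [GlobeHom.trunc, GlobeHom.tag]
  | sig h =>
      rw [GlobeHom.trunc]
      split
      · simp_all [GlobeHom.tag]
      · rw [GlobeHom.tag_ofEq]
  | tau h =>
      rw [GlobeHom.trunc]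
      split
      · simp_all [GlobeHom.tag]
      · rw [GlobeHom.tag_ofEq]

/-- The truncation functor `t_n : G ⥤ G_n`. -/
def truncFunctor (n : ℕ) : Globe ⥤ GlobeLE n where
  obj k := ⟨gl (min (gval k) n), min_le_right _ _⟩
  map {a b} f := ⟨GlobeHom.trunc n f⟩
  map_id _ := rfl
  map_comp {a b c} f g := by
    change GlobeHom (gval a) (gval b) at f
    change GlobeHom (gval b) (gval c) at g
    apply ObjectProperty.hom_ext
    apply GlobeHom.ext_tag
    have hab := GlobeHom.le f
    have hbc := GlobeHom.le g
    show ((f.comp g).trunc n).tag = ((f.trunc n).comp (g.trunc n)).tag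
    erw [GlobeHom.tag_trunc, GlobeHom.tag_comp, GlobeHom.tag_comp, GlobeHom.tag_trunc,
      GlobeHom.tag_trunc]
    cases f <;> cases g <;> simp [GlobeHom.tag] <;> split_ifs <;> omega

/-- The precomposition functor `t_n^*`. -/
def tStar (n : ℕ) : ((GlobeLE n)ᵒᵖ ⥤ Type) ⥤ GlobSet :=
  (Functor.whiskeringLeft _ _ _).obj (truncFunctor n).op

/-- The left Kan extension functor `t_{n!}`, left adjoint of `t_n^*`. -/
noncomputable def tLan (n : ℕ) : GlobSet ⥤ ((GlobeLE n)ᵒᵖ ⥤ Type) :=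
  (truncFunctor n).op.lan

/-- The adjunction `t_{n!} ⊣ t_n^*`. -/
noncomputable def tAdj (n : ℕ) : tLan n ⊣ tStar n :=
  Functor.lanAdjunction _ _

/-- A globular set is `n`-truncated if the unit of `t_{n!} ⊣ t_n^*` is an isomorphism at it. -/
def IsTruncated (n : ℕ) (X : GlobSet) : Prop := IsIso ((tAdj n).unit.app X)

/-- The restriction functor `ι_n^*`. -/
def iotaStar (n : ℕ) : GlobSet ⥤ ((GlobeLE n)ᵒᵖ ⥤ Type) :=
  (Functor.whiskeringLeft _ _ _).obj (iotaGlobe n).op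

/-- The right Kan extension functor `ι_{n*}`, right adjoint of `ι_n^*`. -/
noncomputable def iotaRan (n : ℕ) : ((GlobeLE n)ᵒᵖ ⥤ Type) ⥤ GlobSet :=
  (iotaGlobe n).op.ran

/-- The adjunction `ι_n^* ⊣ ι_{n*}`. -/
noncomputable def iotaAdj (n : ℕ) : iotaStar n ⊣ iotaRan n :=
  Functor.ranAdjunction _ _

/-- A globular set is `n`-coskeletal if the unit of `ι_n^* ⊣ ι_{n*}` is an isomorphism at it. -/
def IsCoskeletal (n : ℕ) (X : GlobSet) : Prop := IsIso ((iotaAdj n).unit.app X)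

/-- The representable globular set `D_k`. -/
def disk (k : ℕ) : GlobSet := yoneda.obj (gl k)

/-- The boundary `∂D_k` of the `k`-disk. -/
def boundary (k : ℕ) : GlobSet where
  obj m := { f : GlobeHom (gval m.unop) k // gval m.unop < k }
  map {m m'} g := TypeCat.ofHom (fun f => ⟨GlobeHom.comp g.unop f.1, lt_of_le_of_lt (GlobeHom.le g.unop) f.2⟩)
  map_id m := by ext f; rfl
  map_comp {m m' m''} g h := by
    ext f; exact GlobeHom.comp_assoc h.unop g.unop f.1

/-- The boundary inclusion `∂D_k ⟶ D_k`. -/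
def boundaryIncl (k : ℕ) : boundary k ⟶ disk k where
  app m := TypeCat.ofHom (fun f => f.1)
  naturality m m' g := by ext f; rfl

/-!
Write `Y` for the truncated globular set with `Y_m = X_m` for `m < n` and `Y_n = X_n/∼`, and
`u : X ⟶ t_n^* Y` for the map sending a `k`-cell to the class of its iterated source in degree
`min k n`. Above degree `n` the truncation `t_n` identifies `σ` and `τ`, so any
`α : X ⟶ t_n^* Z` takes the same value on the source and target of an `(n+1)`-cell, i.e. factors
through `∼`; since `t_n ∘ ι_n = 1`, it then factors uniquely through `u`. Thus `u` is a universal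
arrow from `X` to `t_n^*`, hence the unit `η_X` up to an isomorphism `t_{n!} X ≅ Y`, and the
degreewise claims are read off from `u`.
-/

namespace CategoryTheory

variable {C D : Type*} [Category C] [Category D]

def StructuredArrow.IsUniversal.ofFac {S : C} {T : D ⥤ C} {f : StructuredArrow S T}
    (desc : ∀ g : StructuredArrow S T, f.right ⟶ g.right)
    (fac : ∀ g : StructuredArrow S T, f.hom ≫ T.map (desc g) = g.hom)
    (hom_ext : ∀ {Y : D} (η η' : f.right ⟶ Y), f.hom ≫ T.map η = f.hom ≫ T.map η' → η = η') :
    f.IsUniversal :=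
  IsInitial.ofUniqueHom (fun g => StructuredArrow.homMk (desc g) (fac g))
    (fun g m => StructuredArrow.ext _ _ (hom_ext _ _ ((StructuredArrow.w m).trans (fac g).symm)))

lemma Adjunction.exists_iso_unit_comp_eq {L : C ⥤ D} {R : D ⥤ C} (adj : L ⊣ R) {X : C} {Y : D}
    {e : X ⟶ R.obj Y} (he : (StructuredArrow.mk e).IsUniversal) :
    ∃ φ : L.obj X ≅ Y, adj.unit.app X ≫ R.map φ.hom = e :=
  let i := (mkInitialOfLeftAdjoint R adj X).uniqueUpToIso he
  ⟨(StructuredArrow.proj X R).mapIso i, StructuredArrow.w i.hom⟩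

end CategoryTheory

namespace GlobeHom

lemma eq_ident {a : ℕ} : ∀ f : GlobeHom a a, f = ident a
  | .ident _ => rfl
  | .sig h | .tau h => absurd h (lt_irrefl a)

lemma sig_comp {a b c : ℕ} (h : a < b) (g : GlobeHom b c) :
    (sig h).comp g = sig (h.trans_le g.le) := by
  cases g <;> rfl

lemma tau_comp {a b c : ℕ} (h : a < b) (g : GlobeHom b c) :
    (tau h).comp g = tau (h.trans_le g.le) := by
  cases g <;> rfl

lemma comp_eq_comp_of_lt {a b c : ℕ} (g : GlobeHom a b) (hab : a < b) (f₁ f₂ : GlobeHom b c) :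
    g.comp f₁ = g.comp f₂ := by
  cases g with
  | ident => exact absurd hab (lt_irrefl a)
  | sig => rw [sig_comp, sig_comp]
  | tau => rw [tau_comp, tau_comp]

def ofLE {a b : ℕ} (h : a ≤ b) : GlobeHom a b :=
  if h' : a < b then .sig h' else .ofEq (by omega)

lemma tag_ofLE {a b : ℕ} (h : a ≤ b) : (ofLE h).tag = if a < b then 1 else 0 := by
  unfold ofLE
  split
  · rfl
  · exact tag_ofEq _

lemma trunc_sig_eq_trunc_tau {n m : ℕ} (hn : n ≤ m) :
    (sig (Nat.lt_succ_self m)).trunc n = (tau (Nat.lt_succ_self m)).trunc n := by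
  apply ext_tag
  rw [tag_trunc, tag_trunc, if_neg (by omega), if_neg (by omega)]

lemma tag_trunc_of_le {n a b : ℕ} (hb : b ≤ n) (f : GlobeHom a b) : (f.trunc n).tag = f.tag := by
  rw [tag_trunc]
  split_ifs with h
  · rfl
  · cases f with
    | ident => rfl
    | sig h' | tau h' => omega

/-- `f` and `f'` stand for identities, transported along the non-definitional equations
`min a n = a` and `min b n = b`. -/
lemma trunc_comp_eq_comp {n a b : ℕ} (hb : b ≤ n) (g : GlobeHom a b)
    (f : GlobeHom (min a n) a) (f' : GlobeHom (min b n) b) (hf : f.tag = 0) (hf' : f'.tag = 0) :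
    (g.trunc n).comp f' = f.comp g := by
  apply ext_tag
  rw [tag_comp, tag_comp, hf, hf', tag_trunc_of_le hb]
  split_ifs <;> simp_all

lemma ofLE_comp_eq_trunc_comp_ofLE {n a b : ℕ} (f : GlobeHom a b) (ha : min a n < n) :
    (ofLE (min_le_left a n)).comp f = (f.trunc n).comp (ofLE (min_le_left b n)) := by
  apply ext_tag
  rw [tag_comp, tag_comp, tag_trunc, tag_ofLE, tag_ofLE]
  cases f <;> simp only [tag, Nat.min_def] <;> split_ifs <;> first | omega | simp_all

end GlobeHom

abbrev cellMap (X : GlobSet) {a b : ℕ} (f : GlobeHom a b) : X.obj (op (gl b)) → X.obj (op (gl a)) :=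
  X.map (show gl a ⟶ gl b from f).op

lemma gsrc_eq_cellMap (X : GlobSet) (m : ℕ) :
    gsrc X m = cellMap X (GlobeHom.sig (Nat.lt_succ_self m)) := rfl

lemma gtgt_eq_cellMap (X : GlobSet) (m : ℕ) :
    gtgt X m = cellMap X (GlobeHom.tau (Nat.lt_succ_self m)) := rfl

lemma cellMap_ident (X : GlobSet) (a : ℕ) : cellMap X (GlobeHom.ident a) = id :=
  funext (X.map_id_apply _)

lemma cellMap_cellMap (X : GlobSet) {a b c : ℕ} (f : GlobeHom a b) (g : GlobeHom b c)
    (x : X.obj (op (gl c))) : cellMap X f (cellMap X g x) = cellMap X (f.comp g) x :=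
  (X.map_comp_apply _ _ x).symm

lemma cellMap_bijective_of_tag_eq_zero (X : GlobSet) {a b : ℕ} (f : GlobeHom a b)
    (hf : f.tag = 0) : Function.Bijective (cellMap X f) := by
  cases f with
  | ident => exact cellMap_ident X a ▸ Function.bijective_id
  | sig | tau => simp [GlobeHom.tag] at hf

lemma cellMap_eq_gsrc_or_gtgt (X : GlobSet) {m a : ℕ} (g : GlobeHom m a) (d : GlobeHom (m + 1) a)
    (x : X.obj (op (gl a))) :
    cellMap X g x = gsrc X m (cellMap X d x) ∨ cellMap X g x = gtgt X m (cellMap X d x) := by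
  rw [gsrc_eq_cellMap, gtgt_eq_cellMap, cellMap_cellMap, cellMap_cellMap, GlobeHom.sig_comp,
    GlobeHom.tau_comp]
  cases g with
  | ident => exact absurd d.le (by omega)
  | sig => exact Or.inl rfl
  | tau => exact Or.inr rfl

lemma GlobeLE.hom_self_eq_id {n : ℕ} {m : GlobeLE n} (f : m ⟶ m) : f = 𝟙 m :=
  ObjectProperty.hom_ext _ (GlobeHom.eq_ident (a := gval m.obj) f.hom)

lemma GlobeLE.tag_eqToHom {n : ℕ} {m m' : GlobeLE n} (e : m = m') :
    GlobeHom.tag (a := gval m.obj) (eqToHom e).hom = 0 := by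
  subst e; rfl

lemma truncFunctor_obj_iotaGlobe_obj {n : ℕ} (m : GlobeLE n) :
    (truncFunctor n).obj ((iotaGlobe n).obj m) = m :=
  ObjectProperty.FullSubcategory.ext (Nat.min_eq_left m.property)

def iotaTruncIso (n : ℕ) : iotaGlobe n ⋙ truncFunctor n ≅ 𝟭 (GlobeLE n) :=
  NatIso.ofComponents (fun m => eqToIso (truncFunctor_obj_iotaGlobe_obj m))
    (fun {m m'} g => ObjectProperty.hom_ext _ (GlobeHom.trunc_comp_eq_comp m'.property g.hom _ _
      (GlobeLE.tag_eqToHom (truncFunctor_obj_iotaGlobe_obj m))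
      (GlobeLE.tag_eqToHom (truncFunctor_obj_iotaGlobe_obj m'))))

/-- Empty unless `n ≤ m`, so that one quotient formula serves every degree of `G_n`. -/
def truncRel (n : ℕ) (X : GlobSet) (m : ℕ) (a b : X.obj (op (gl m))) : Prop :=
  n ≤ m ∧ ∃ c : X.obj (op (gl (m + 1))), gsrc X m c = a ∧ gtgt X m c = b

/-- In degree `n` every map `n ⟶ a` factors as `σ` or `τ` through a common `d : n + 1 ⟶ a`,
so all of them agree modulo `∼`. -/
lemma quot_mk_cellMap_eq (X : GlobSet) {n m a : ℕ} (hm : m ≤ n) (g₁ g₂ : GlobeHom m a)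
    (h : m < n → g₁ = g₂) (x : X.obj (op (gl a))) :
    Quot.mk (truncRel n X m) (cellMap X g₁ x) = Quot.mk _ (cellMap X g₂ x) := by
  rcases hm.lt_or_eq with hlt | rfl
  · rw [h hlt]
  rcases g₁.le.eq_or_lt with rfl | hlt
  · rw [g₁.eq_ident, g₂.eq_ident]
  set d := GlobeHom.ofLE (Nat.succ_le_of_lt hlt)
  have hst : Quot.mk (truncRel m X m) (gsrc X m (cellMap X d x)) =
      Quot.mk _ (gtgt X m (cellMap X d x)) :=
    Quot.sound ⟨le_rfl, _, rfl, rfl⟩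
  rcases cellMap_eq_gsrc_or_gtgt X g₁ d x with h₁ | h₁ <;>
    rcases cellMap_eq_gsrc_or_gtgt X g₂ d x with h₂ | h₂ <;>
    rw [h₁, h₂]
  exacts [hst, hst.symm]

lemma quot_mk_cellMap_gsrc_eq_gtgt (X : GlobSet) {n m a : ℕ} (hm : m ≤ n) (f : GlobeHom m a)
    (ha : n ≤ a) (c : X.obj (op (gl (a + 1)))) :
    Quot.mk (truncRel n X m) (cellMap X f (gsrc X a c)) =
      Quot.mk _ (cellMap X f (gtgt X a c)) := by
  rw [gsrc_eq_cellMap, gtgt_eq_cellMap, cellMap_cellMap, cellMap_cellMap]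
  exact quot_mk_cellMap_eq X hm _ _ (fun h => f.comp_eq_comp_of_lt (h.trans_le ha) _ _) c

/-- Stated for `m = n` because the unit lands in degree `min n n`, which is not `n` by `rfl`. -/
lemma quot_mk_cellMap_eq_iff (X : GlobSet) {m n : ℕ} (hm : m = n) (g : GlobeHom m n)
    (x y : X.obj (op (gl n))) :
    Quot.mk (truncRel n X m) (cellMap X g x) = Quot.mk _ (cellMap X g y) ↔
      Relation.EqvGen (fun a b => ∃ c, gsrc X n c = a ∧ gtgt X n c = b) x y := by
  subst hm
  rw [g.eq_ident, cellMap_ident, id, id, Quot.eq]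
  exact ⟨Relation.EqvGen.mono (fun _ _ h => h.2) x y,
    Relation.EqvGen.mono (fun _ _ h => ⟨le_rfl, h⟩) x y⟩

def truncQuot (n : ℕ) (X : GlobSet) : (GlobeLE n)ᵒᵖ ⥤ Type where
  obj m := Quot (truncRel n X (gval m.unop.obj))
  map {m m'} g := TypeCat.ofHom (Quot.lift
    (fun x => Quot.mk _ (cellMap X (show GlobeHom (gval m'.unop.obj) (gval m.unop.obj)
      from g.unop.hom) x))
    (by
      rintro _ _ ⟨hn, c, rfl, rfl⟩
      exact quot_mk_cellMap_gsrc_eq_gtgt X m'.unop.property _ hn c))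
  map_id m := by
    ext q
    induction q using Quot.ind with
    | _ x => exact congrArg (Quot.mk _) (((iotaStar n).obj X).map_id_apply m x)
  map_comp g h := by
    ext q
    induction q using Quot.ind with
    | _ x => exact congrArg (Quot.mk _) (((iotaStar n).obj X).map_comp_apply g h x)

/-- The iterated source is an arbitrary choice: by `quot_mk_cellMap_eq`, every map
`min k n ⟶ k` gives the same class. -/
def truncQuotUnit (n : ℕ) (X : GlobSet) : X ⟶ (tStar n).obj (truncQuot n X) where
  app k := TypeCat.ofHom fun x =>
    Quot.mk _ (cellMap X (GlobeHom.ofLE (min_le_left (gval k.unop) n)) x)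
  naturality k k' f := by
    ext (x : X.obj (op (gl (gval k.unop))))
    let g : GlobeHom (gval k'.unop) (gval k.unop) := f.unop
    change Quot.mk (truncRel n X (min (gval k'.unop) n))
        (cellMap X (GlobeHom.ofLE _) (cellMap X g x)) =
      Quot.mk _ (cellMap X (g.trunc n) (cellMap X (GlobeHom.ofLE _) x))
    rw [cellMap_cellMap, cellMap_cellMap]
    exact quot_mk_cellMap_eq X (min_le_right _ _) _ _
      (GlobeHom.ofLE_comp_eq_trunc_comp_ofLE g) x

lemma app_gsrc_eq_app_gtgt {n m : ℕ} {X : GlobSet} {Z : (GlobeLE n)ᵒᵖ ⥤ Type}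
    (α : X ⟶ (tStar n).obj Z) (hm : n ≤ m) (c : X.obj (op (gl (m + 1)))) :
    α.app (op (gl m)) (gsrc X m c) = α.app (op (gl m)) (gtgt X m c) := by
  rw [gsrc, gtgt, NatTrans.naturality_apply, NatTrans.naturality_apply]
  exact congrArg (fun u => Z.map (Quiver.Hom.op ⟨u⟩) _) (GlobeHom.trunc_sig_eq_trunc_tau hm)

def truncQuotDesc {n : ℕ} {X : GlobSet} {Z : (GlobeLE n)ᵒᵖ ⥤ Type} (α : X ⟶ (tStar n).obj Z) :
    truncQuot n X ⟶ Z :=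
  let β : (iotaStar n).obj X ⟶ Z := Functor.whiskerLeft (iotaGlobe n).op α ≫
    Functor.whiskerRight (NatTrans.op (iotaTruncIso n).inv) Z
  { app m := TypeCat.ofHom (Quot.lift (β.app m) (by
      rintro _ _ ⟨hm, c, rfl, rfl⟩
      exact congrArg (Z.map _) (app_gsrc_eq_app_gtgt α hm c)))
    naturality m m' g := by
      ext q
      induction q using Quot.ind with
      | _ x => exact NatTrans.naturality_apply β g x }

lemma truncQuotUnit_comp_tStar_map_truncQuotDesc {n : ℕ} {X : GlobSet}
    {Z : (GlobeLE n)ᵒᵖ ⥤ Type} (α : X ⟶ (tStar n).obj Z) :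
    truncQuotUnit n X ≫ (tStar n).map (truncQuotDesc α) = α := by
  ext k (x : X.obj (op (gl (gval k.unop))))
  let f : gl (min (gval k.unop) n) ⟶ gl (gval k.unop) := GlobeHom.ofLE (min_le_left _ _)
  have hid : (iotaTruncIso n).inv.app ((truncFunctor n).obj k.unop) ≫ (truncFunctor n).map f =
      𝟙 _ := GlobeLE.hom_self_eq_id _
  have hmor : ((truncFunctor n).map f).op ≫
      (NatTrans.op (iotaTruncIso n).inv).app ((truncFunctor n).op.obj k) = 𝟙 _ :=
    Quiver.Hom.unop_inj hid
  change Z.map _ (α.app _ (X.map f.op x)) = α.app k x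
  rw [NatTrans.naturality_apply]
  refine (Z.map_comp_apply ((truncFunctor n).map f).op _ _).symm.trans ?_
  exact (ConcreteCategory.congr_hom (congrArg Z.map hmor) _).trans (Z.map_id_apply _ _)

lemma truncQuotUnit_app_surjective (n : ℕ) (X : GlobSet) {k : ℕ} (hk : k ≤ n) :
    Function.Surjective ((truncQuotUnit n X).app (op (gl k))) :=
  Quot.mk_surjective.comp (cellMap_bijective_of_tag_eq_zero X (GlobeHom.ofLE (min_le_left k n))
    (by rw [GlobeHom.tag_ofLE, if_neg (by omega)])).2

lemma truncQuot_hom_ext {n : ℕ} {X : GlobSet} {Z : (GlobeLE n)ᵒᵖ ⥤ Type}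
    {β₁ β₂ : truncQuot n X ⟶ Z}
    (h : truncQuotUnit n X ≫ (tStar n).map β₁ = truncQuotUnit n X ≫ (tStar n).map β₂) :
    β₁ = β₂ := by
  ext ⟨m⟩ : 2
  rw [← congrArg op (truncFunctor_obj_iotaGlobe_obj m)]
  ext q
  obtain ⟨x, rfl⟩ := truncQuotUnit_app_surjective n X m.property q
  exact ConcreteCategory.congr_hom (NatTrans.congr_app h _) x

def isUniversalTruncQuotUnit (n : ℕ) (X : GlobSet) :
    (StructuredArrow.mk (truncQuotUnit n X) : StructuredArrow X (tStar n)).IsUniversal :=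
  StructuredArrow.IsUniversal.ofFac (fun g => truncQuotDesc g.hom)
    (fun g => truncQuotUnit_comp_tStar_map_truncQuotDesc g.hom) (fun _ _ h => truncQuot_hom_ext h)

lemma truncQuotUnit_app_bijective (n : ℕ) (X : GlobSet) {k : ℕ} (hk : k < n) :
    Function.Bijective ((truncQuotUnit n X).app (op (gl k))) := by
  refine ⟨fun x y hxy => ?_, truncQuotUnit_app_surjective n X hk.le⟩
  have hrel : truncRel n X (min k n) ≤ Eq := fun _ _ h => absurd h.1 (by omega)
  exact (cellMap_bijective_of_tag_eq_zero X (GlobeHom.ofLE (min_le_left k n))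
    (by rw [GlobeHom.tag_ofLE, if_neg (by omega)])).1
    (Relation.EqvGen.eqvGen_le hrel _ _ (Quot.eqvGen_exact hxy))

lemma truncQuotUnit_app_self_eq_iff (n : ℕ) (X : GlobSet) (x y : X.obj (op (gl n))) :
    (truncQuotUnit n X).app (op (gl n)) x = (truncQuotUnit n X).app (op (gl n)) y ↔
      Relation.EqvGen (fun a b => ∃ c, gsrc X n c = a ∧ gtgt X n c = b) x y :=
  quot_mk_cellMap_eq_iff X (Nat.min_self n) _ x y

/-- For a globular set `X`, the unit `η_X : X ⟶ t_n^* t_{n!} X` is a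
bijection in every degree `k < n`, and in degree `n` it is surjective and identifies exactly
the `n`-cells related by the equivalence relation generated by the existence of a connecting
`(n+1)`-cell, i.e. it induces a bijection `X_n/∼ ≅ (t_{n!} X)(n)`. -/
theorem statement0 (n : ℕ) (X : GlobSet) :
    (∀ k : ℕ, k < n →
      Function.Bijective (((tAdj n).unit.app X).app (op (gl k)))) ∧
    Function.Surjective (((tAdj n).unit.app X).app (op (gl n))) ∧
    (∀ x y : X.obj (op (gl n)),
      ((tAdj n).unit.app X).app (op (gl n)) x = ((tAdj n).unit.app X).app (op (gl n)) y ↔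
        Relation.EqvGen
          (fun a b => ∃ c : X.obj (op (gl (n+1))), gsrc X n c = a ∧ gtgt X n c = b) x y) := by
  obtain ⟨φ, hφ⟩ := (tAdj n).exists_iso_unit_comp_eq (isUniversalTruncQuotUnit n X)
  let e (k : ℕ) := (((tStar n).mapIso φ).app (op (gl k))).toEquiv
  have he (k : ℕ) :
      e k ∘ ((tAdj n).unit.app X).app (op (gl k)) = (truncQuotUnit n X).app (op (gl k)) :=
    funext fun x => ConcreteCategory.congr_hom (NatTrans.congr_app hφ _) x
  refine ⟨fun k hk => ?_, ?_, fun x y => ?_⟩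
  · rw [← Equiv.comp_bijective _ (e k), he]
    exact truncQuotUnit_app_bijective n X hk
  · rw [← Equiv.comp_surjective _ (e n), he]
    exact truncQuotUnit_app_surjective n X le_rfl
  · rw [← (e n).apply_eq_iff_eq]
    change (e n ∘ _) x = (e n ∘ _) y ↔ _
    rw [he]
    exact truncQuotUnit_app_self_eq_iff n X x y
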